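/- arXiv:2005.09922 — 2 statements merged into one kernel-verified Lean document; each statement's English description precedes it below -/
import Mathlib

section
/- The probability generating function Z_n(t) := E[t^{X_n}] of the maximum-weight path satisfies the recurrence Z_n(t) = Σ_{i=1}^{n-1} t·[(1-p)^{C(i,2)} - (1-p)^{C(i+1,2)}]·Z_{n-i}(t) + (1-p)^{C(n,2)} for n ≥ 1. -/
open Finset Filter

noncomputable section

/-- The weight of a path, given as a list of vertices. -/
def pathWeight (wt : ℕ → ℕ → ℕ) (l : List ℕ) : ℕ :=
  ((l.zip l.tail).map fun e => wt e.1 e.2).sum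

/-- `l` is a directed path from `a` to `b` in the transitive tournament on `ℕ`. -/
def IsPath (a b : ℕ) (l : List ℕ) : Prop :=
  l.Chain' (· < ·) ∧ l.head? = some a ∧ l.getLast? = some b

/-- `maxW wt a b` is the maximum weight of a directed path from `a` to `b`. -/
def maxW (wt : ℕ → ℕ → ℕ) (a b : ℕ) : ℕ :=
  sSup {m | ∃ l, IsPath a b l ∧ pathWeight wt l = m}

/-- The edges of the transitive tournament on `n` vertices. -/
abbrev Edge (n : ℕ) := {e : Fin n × Fin n // (e.1 : ℕ) < (e.2 : ℕ)}

/-- The sample space: an assignment of a `0/1` weight (a `Bool`) to each edge. -/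
abbrev Omega (n : ℕ) := Edge n → Bool

/-- The weight function on vertices `1, …, n` induced by an outcome `w`. -/
def wtOf {n : ℕ} (w : Omega n) (a b : ℕ) : ℕ :=
  if h : 1 ≤ a ∧ a < b ∧ b ≤ n then
    (if w ⟨(⟨a - 1, by omega⟩, ⟨b - 1, by omega⟩), by show a - 1 < b - 1; omega⟩
      then 1 else 0)
  else 0

/-- The probability of outcome `w`: each edge independently has weight 1
with probability `p` and weight 0 with probability `1 - p`. -/
def prob (p : ℝ) {n : ℕ} (w : Omega n) : ℝ :=
  ∏ e : Edge n, (if w e then p else 1 - p)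

/-- `X n w` : the maximum weight of a directed path from vertex `1` to vertex `n`. -/
def X (n : ℕ) (w : Omega n) : ℕ := maxW (wtOf w) 1 n

/-- The expectation of `X n` under i.i.d. Bernoulli(p) edge weights. -/
def EX (p : ℝ) (n : ℕ) : ℝ := ∑ w : Omega n, prob p w * (X n w : ℝ)


/-- `Z_n(t) = E[t^{X_n}]`, the probability generating function of `X_n`,
as a polynomial in `t`. -/
def Zpoly (p : ℝ) (n : ℕ) : Polynomial ℝ :=
  ∑ w : Omega n, Polynomial.C (prob p w) * Polynomial.X ^ (X n w)

/-!
Condition on the first vertex `i + 1` that is entered by an edge of weight 1. All edges among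
`1, …, i` then have weight 0, so a path from `1` gains nothing before it leaves `{1, …, i}`, at most
1 on the step that leaves it, and exactly 1 if that step enters `i + 1`. Hence `X_n` is 1 plus the
maximal weight from `i + 1` to `n`, which is `X_{n-i}` for the edges among `i + 1, …, n`. The event
only involves edges leaving `1, …, i`, so it is independent of that copy of `X_{n-i}`; its probability
`(1-p)^C(i,2) - (1-p)^C(i+1,2)` is the difference of the probabilities that all edges among the
first `i`, resp. `i + 1`, vertices vanish. If there is no such vertex, all weights vanish and
`X_n = 0`, which has probability `(1-p)^C(n,2)`.
-/

section Paths

variable {wt wt' : ℕ → ℕ → ℕ} {a b i : ℕ} {l : List ℕ}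

@[simp] lemma pathWeight_nil : pathWeight wt [] = 0 := rfl

@[simp] lemma pathWeight_singleton (x : ℕ) : pathWeight wt [x] = 0 := rfl

@[simp] lemma pathWeight_cons_cons (x y : ℕ) (t : List ℕ) :
    pathWeight wt (x :: y :: t) = wt x y + pathWeight wt (y :: t) := by
  simp [pathWeight]

lemma pathWeight_congr (h : ∀ x ∈ l, ∀ y ∈ l, wt x y = wt' x y) :
    pathWeight wt l = pathWeight wt' l := by
  unfold pathWeight
  congr 1
  refine List.map_congr_left fun e he => ?_
  have he' := List.of_mem_zip he
  exact h _ he'.1 _ (List.mem_of_mem_tail he'.2)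

lemma pathWeight_map (f : ℕ → ℕ) :
    pathWeight wt (l.map f) = pathWeight (fun x y => wt (f x) (f y)) l := by
  simp only [pathWeight, ← List.map_tail, List.zip_map, List.map_map]
  rfl

lemma pathWeight_le_mul_length {K : ℕ} (hwt : ∀ x y, wt x y ≤ K) :
    pathWeight wt l ≤ K * l.length := by
  induction l with
  | nil => simp
  | cons x t ih =>
    cases t with
    | nil => simp
    | cons y s =>
      rw [pathWeight_cons_cons, List.length_cons, Nat.mul_succ]
      linarith [hwt x y]

lemma isPath_iff :
    IsPath a b l ↔ l.IsChain (· < ·) ∧ l.head? = some a ∧ l.getLast? = some b :=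
  Iff.rfl

lemma IsPath.pairwise (h : IsPath a b l) : l.Pairwise (· < ·) :=
  List.isChain_iff_pairwise.1 h.1

lemma IsPath.ne_nil (h : IsPath a b l) : l ≠ [] := by
  rintro rfl
  simp [IsPath] at h

lemma IsPath.mem_bounds (h : IsPath a b l) {x : ℕ} (hx : x ∈ l) : a ≤ x ∧ x ≤ b := by
  have hle : l.Pairwise (· ≤ ·) := h.pairwise.imp le_of_lt
  have hhead : l.head h.ne_nil = a := by simpa [List.head?_eq_some_head h.ne_nil] using h.2.1
  have hlast : l.getLast h.ne_nil = b := by simpa [List.getLast?_eq_some_getLast h.ne_nil] using h.2.2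
  exact ⟨hhead ▸ hle.rel_head hx, hlast ▸ hle.rel_getLast hx⟩

lemma IsPath.length_le (h : IsPath a b l) : l.length ≤ b + 1 := by
  have hnodup : l.Nodup := h.pairwise.imp ne_of_lt
  calc l.length = l.toFinset.card := (List.toFinset_card_of_nodup hnodup).symm
    _ ≤ (Finset.range (b + 1)).card := Finset.card_le_card fun x hx => by
        simpa [Nat.lt_succ_iff] using (h.mem_bounds (List.mem_toFinset.1 hx)).2
    _ = b + 1 := Finset.card_range _

lemma isPath_cons_cons {x y : ℕ} {t : List ℕ} :
    IsPath x b (x :: y :: t) ↔ x < y ∧ IsPath y b (y :: t) := by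
  simp [isPath_iff, List.isChain_cons_cons, and_assoc]

lemma isPath_map_add : IsPath (a + i) (b + i) (l.map (· + i)) ↔ IsPath a b l := by
  simp [isPath_iff, List.isChain_map]

end Paths

section MaxWeight

variable {wt wt' : ℕ → ℕ → ℕ} {a b c i : ℕ} {l : List ℕ}

lemma bddAbove_pathWeights {K : ℕ} (hwt : ∀ x y, wt x y ≤ K) :
    BddAbove {m | ∃ l, IsPath a b l ∧ pathWeight wt l = m} := by
  refine ⟨K * (b + 1), ?_⟩
  rintro _ ⟨l, hl, rfl⟩
  exact (pathWeight_le_mul_length hwt).trans (Nat.mul_le_mul_left K hl.length_le)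

lemma pathWeight_le_maxW {K : ℕ} (hwt : ∀ x y, wt x y ≤ K) (hl : IsPath a b l) :
    pathWeight wt l ≤ maxW wt a b :=
  le_csSup (bddAbove_pathWeights hwt) ⟨l, hl, rfl⟩

lemma maxW_le {m : ℕ} (h : ∀ l, IsPath a b l → pathWeight wt l ≤ m) : maxW wt a b ≤ m :=
  csSup_le' <| by rintro _ ⟨l, hl, rfl⟩; exact h l hl

lemma exists_isPath_pathWeight_eq_maxW {K : ℕ} (hwt : ∀ x y, wt x y ≤ K) (hab : a ≤ b) :
    ∃ l, IsPath a b l ∧ pathWeight wt l = maxW wt a b := by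
  refine Nat.sSup_mem ?_ (bddAbove_pathWeights hwt)
  rcases hab.eq_or_lt with rfl | hlt
  · exact ⟨0, [a], by simp [isPath_iff], rfl⟩
  · exact ⟨_, [a, b], by simp [isPath_iff, hlt], rfl⟩

lemma maxW_congr (h : ∀ x y, a ≤ x → wt x y = wt' x y) : maxW wt a b = maxW wt' a b := by
  unfold maxW
  congr 1
  ext m
  refine exists_congr fun l => and_congr_right fun hl => ?_
  rw [pathWeight_congr fun x hx y _ => h x y (hl.mem_bounds hx).1]

lemma maxW_add_add :
    maxW wt (a + i) (b + i) = maxW (fun x y => wt (x + i) (y + i)) a b := by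
  unfold maxW
  congr 1
  ext m
  constructor
  · rintro ⟨l, hl, rfl⟩
    have hl' : (l.map (· - i)).map (· + i) = l := by
      conv_rhs => rw [← List.map_id l]
      rw [List.map_map]
      exact List.map_congr_left fun x hx => by
        have := (hl.mem_bounds hx).1
        simp only [Function.comp_apply, id]; omega
    rw [← hl', isPath_map_add] at hl
    exact ⟨_, hl, by rw [← pathWeight_map, hl']⟩
  · rintro ⟨l, hl, rfl⟩
    exact ⟨_, isPath_map_add.2 hl, pathWeight_map _⟩

lemma add_maxW_le {K : ℕ} (hwt : ∀ x y, wt x y ≤ K) (hac : a < c) (hcb : c ≤ b) :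
    wt a c + maxW wt c b ≤ maxW wt a b := by
  obtain ⟨l, hl, hlw⟩ := exists_isPath_pathWeight_eq_maxW hwt hcb
  obtain ⟨t, rfl⟩ : ∃ t, l = c :: t := by
    obtain _ | ⟨x, t⟩ := l
    · exact absurd rfl hl.ne_nil
    · exact ⟨t, by simpa [isPath_iff] using hl.2.1⟩
  rw [← hlw, ← pathWeight_cons_cons]
  exact pathWeight_le_maxW hwt (isPath_cons_cons.2 ⟨hac, hl⟩)

lemma maxW_le_maxW_of_le {K : ℕ} (hwt : ∀ x y, wt x y ≤ K) (hac : a ≤ c) (hcb : c ≤ b) :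
    maxW wt c b ≤ maxW wt a b := by
  rcases hac.eq_or_lt with rfl | hlt
  · rfl
  · exact le_of_add_le_right (add_maxW_le hwt hlt hcb)

lemma maxW_eq_zero (hb : ∀ x y, y ≤ b → wt x y = 0) : maxW wt a b = 0 := by
  refine Nat.eq_zero_of_le_zero (maxW_le fun l hl => ?_)
  rw [pathWeight_congr (wt' := fun _ _ => 0) fun x _ y hy => hb x y (hl.mem_bounds hy).2]
  simp [pathWeight]

end MaxWeight

section FirstUnitEdge

variable {wt : ℕ → ℕ → ℕ} {a b c i : ℕ}

lemma pathWeight_le_one_add_maxW (hwt : ∀ x y, wt x y ≤ 1) (hlow : ∀ x y, y ≤ i → wt x y = 0)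
    (hib : i < b) {l : List ℕ} {x : ℕ} (hl : IsPath x b l) (hxi : x ≤ i) :
    pathWeight wt l ≤ 1 + maxW wt (i + 1) b := by
  induction l generalizing x with
  | nil => exact absurd rfl hl.ne_nil
  | cons x' t ih =>
    obtain rfl : x' = x := by simpa [isPath_iff] using hl.2.1
    obtain _ | ⟨y, s⟩ := t
    · have := (hl.mem_bounds (List.mem_singleton_self x')).2
      simp [isPath_iff] at hl
      omega
    obtain ⟨hxy, hl'⟩ := isPath_cons_cons.1 hl
    rw [pathWeight_cons_cons]
    by_cases hyi : y ≤ i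
    · rw [hlow x' y hyi, zero_add]
      exact ih hl' hyi
    · have hyb := (hl'.mem_bounds (List.mem_cons_self ..)).2
      have := hwt x' y
      have := pathWeight_le_maxW hwt hl'
      have := maxW_le_maxW_of_le hwt (show i + 1 ≤ y by omega) hyb
      omega

theorem maxW_eq_one_add (hwt : ∀ x y, wt x y ≤ 1) (hlow : ∀ x y, y ≤ i → wt x y = 0)
    (hone : wt c (i + 1) = 1) (hac : a ≤ c) (hci : c ≤ i) (hib : i < b) :
    maxW wt a b = 1 + maxW wt (i + 1) b := by
  refine le_antisymm (maxW_le fun l hl => pathWeight_le_one_add_maxW hwt hlow hib hl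
    (hac.trans hci)) ?_
  calc 1 + maxW wt (i + 1) b = wt c (i + 1) + maxW wt (i + 1) b := by rw [hone]
    _ ≤ maxW wt c b := add_maxW_le hwt (by omega) hib
    _ ≤ maxW wt a b := maxW_le_maxW_of_le hwt hac (by omega)

end FirstUnitEdge

section Bernoulli

variable {β γ M : Type*} [Fintype β] [Fintype γ] [AddCommMonoid M] [Module ℝ M] (p : ℝ)

def bernoulliWeight (u : β → Bool) : ℝ :=
  ∏ b, if u b then p else 1 - p

lemma sum_bernoulliWeight [DecidableEq β] : ∑ u : β → Bool, bernoulliWeight p u = 1 := by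
  have := Fintype.prod_sum fun (_ : β) (t : Bool) => if t then p else 1 - p
  simp only [Fintype.sum_bool] at this
  simp [bernoulliWeight, ← this]

variable (s : Set β) [DecidablePred (· ∈ s)]

lemma bernoulliWeight_piEquivPiSubtypeProd_symm (x : s → Bool) (y : ↥sᶜ → Bool) :
    bernoulliWeight p ((Equiv.piEquivPiSubtypeProd (· ∈ s) _).symm (x, y)) =
      bernoulliWeight p x * bernoulliWeight p y := by
  rw [bernoulliWeight, ← Fintype.prod_subtype_mul_prod_subtype (· ∈ s)]
  congr 1 <;> exact Finset.prod_congr rfl fun b _ => by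
    simp [Equiv.piEquivPiSubtypeProd_symm_apply, b.2]

lemma sum_bernoulliWeight_smul_eq_sum_sum [DecidableEq β] (H : (β → Bool) → M) :
    ∑ u, bernoulliWeight p u • H u =
      ∑ x : s → Bool, ∑ y : ↥sᶜ → Bool, (bernoulliWeight p x * bernoulliWeight p y) •
        H ((Equiv.piEquivPiSubtypeProd (· ∈ s) _).symm (x, y)) := by
  rw [← (Equiv.piEquivPiSubtypeProd (· ∈ s) _).symm.sum_comp, Fintype.sum_prod_type]
  simp only [bernoulliWeight_piEquivPiSubtypeProd_symm]
  rfl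

theorem sum_bernoulliWeight_mul_smul_of_dependsOn [DecidableEq β] {f : (β → Bool) → ℝ}
    {G : (β → Bool) → M} (hf : DependsOn f sᶜ) (hG : DependsOn G s) :
    ∑ u, (bernoulliWeight p u * f u) • G u =
      (∑ u, bernoulliWeight p u * f u) • ∑ u, bernoulliWeight p u • G u := by
  set e := Equiv.piEquivPiSubtypeProd (· ∈ s) fun _ => Bool with he
  have hf' : ∀ x y, f (e.symm (x, y)) = f (e.symm (fun _ => false, y)) := fun x y =>
    hf fun b hb => by simp_all [e, Equiv.piEquivPiSubtypeProd_symm_apply]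
  have hG' : ∀ x y, G (e.symm (x, y)) = G (e.symm (x, fun _ => false)) := fun x y =>
    hG fun b hb => by simp_all [e, Equiv.piEquivPiSubtypeProd_symm_apply]
  have hf_sum : ∑ u, bernoulliWeight p u * f u =
      ∑ y : ↥sᶜ → Bool, bernoulliWeight p y * f (e.symm (fun _ => false, y)) := by
    have := sum_bernoulliWeight_smul_eq_sum_sum p s f
    rw [← he] at this
    simp only [smul_eq_mul, hf'] at this
    rw [this]
    simp_rw [mul_assoc, ← Finset.mul_sum, ← Finset.sum_mul, sum_bernoulliWeight, one_mul]
  have hG_sum : ∑ u, bernoulliWeight p u • G u =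
      ∑ x : s → Bool, bernoulliWeight p x • G (e.symm (x, fun _ => false)) := by
    rw [sum_bernoulliWeight_smul_eq_sum_sum p s G, ← he]
    simp_rw [hG', ← Finset.sum_smul, ← Finset.mul_sum, sum_bernoulliWeight, mul_one]
  rw [hf_sum, hG_sum, Finset.sum_smul_sum, Finset.sum_comm]
  simp_rw [mul_smul]
  rw [sum_bernoulliWeight_smul_eq_sum_sum p s, ← he]
  simp_rw [hf', hG', smul_smul]
  exact Finset.sum_congr rfl fun x _ => Finset.sum_congr rfl fun y _ => by congr 1; ring

theorem sum_bernoulliWeight_smul_comp [DecidableEq β] [DecidableEq γ] {ι : γ → β}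
    (hι : ι.Injective) (G : (γ → Bool) → M) :
    ∑ u : β → Bool, bernoulliWeight p u • G (u ∘ ι) = ∑ z, bernoulliWeight p z • G z := by
  classical
  set j := Equiv.ofInjective ι hι
  rw [sum_bernoulliWeight_smul_eq_sum_sum p (Set.range ι)]
  have hcomp : ∀ (x : Set.range ι → Bool) y,
      (Equiv.piEquivPiSubtypeProd (· ∈ Set.range ι) fun _ => Bool).symm (x, y) ∘ ι = x ∘ j :=
    fun x y => funext fun z => by simp [Equiv.piEquivPiSubtypeProd_symm_apply, j]
  simp_rw [hcomp, ← Finset.sum_smul, ← Finset.mul_sum, sum_bernoulliWeight, mul_one]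
  convert Fintype.sum_equiv (j.arrowCongr (Equiv.refl Bool)).symm
    (fun x => bernoulliWeight p x • G (x ∘ j)) _ fun x => ?_
  have hx : (j.arrowCongr (Equiv.refl Bool)).symm x = x ∘ j := rfl
  rw [hx, bernoulliWeight, bernoulliWeight]
  congr 1
  exact (Fintype.prod_equiv j _ _ fun _ => rfl).symm

theorem sum_bernoulliWeight_mul_ite_forall_mem_false [DecidableEq β] (t : Finset β) :
    ∑ u, bernoulliWeight p u * (if ∀ b ∈ t, u b = false then 1 else 0) = (1 - p) ^ #t := by
  have := sum_bernoulliWeight_smul_comp p (M := ℝ) Subtype.val_injective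
    (fun z : t → Bool => if z = fun _ => false then 1 else 0)
  simp only [smul_eq_mul] at this
  convert this using 3 with u
  · simp [funext_iff]
  · simp [bernoulliWeight, Finset.prod_const]

end Bernoulli

section Tournament

variable {n i : ℕ}

def Edge.shift (i : ℕ) (e : Edge (n - i)) : Edge n :=
  ⟨(⟨e.1.1 + i, by have := e.1.1.2; omega⟩, ⟨e.1.2 + i, by have := e.1.2.2; omega⟩), by
    simpa using e.2⟩

lemma Edge.shift_injective : (Edge.shift (n := n) i).Injective := fun e e' h => by
  simp only [Edge.shift, Subtype.mk.injEq, Prod.mk.injEq, Fin.mk.injEq, add_left_inj] at h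
  exact Subtype.ext (Prod.ext (Fin.ext h.1) (Fin.ext h.2))

lemma wtOf_le_one (w : Omega n) (a b : ℕ) : wtOf w a b ≤ 1 := by
  unfold wtOf
  split_ifs <;> omega

lemma wtOf_edge (w : Omega n) (e : Edge n) :
    wtOf w (e.1.1 + 1) (e.1.2 + 1) = if w e then 1 else 0 := by
  rw [wtOf, dif_pos (by have := e.2; have := e.1.2.2; omega)]
  rfl

lemma wtOf_eq_zero (w : Omega n) {a b : ℕ} (h : ∀ e : Edge n, (e.1.2 : ℕ) + 1 = b → w e = false) :
    wtOf w a b = 0 := by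
  unfold wtOf
  split_ifs with hab hw
  · rw [h _ (show b - 1 + 1 = b by omega)] at hw
    exact absurd hw Bool.false_ne_true
  all_goals rfl

lemma wtOf_comp_shift (w : Omega n) {a : ℕ} (ha : 1 ≤ a) (b : ℕ) :
    wtOf (w ∘ Edge.shift i) a b = wtOf w (a + i) (b + i) := by
  unfold wtOf
  by_cases hab : a < b ∧ b ≤ n - i
  · rw [dif_pos ⟨ha, hab⟩, dif_pos (by omega)]
    congr 2
    exact congrArg w (Subtype.ext (Prod.ext (Fin.ext (by simp [Edge.shift]; omega))
      (Fin.ext (by simp [Edge.shift]; omega))))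
  · rw [dif_neg (by omega), dif_neg (by omega)]

lemma dependsOn_comp_shift {α : Type*} (F : Omega (n - i) → α) :
    DependsOn (fun w : Omega n => F (w ∘ Edge.shift i)) {e : Edge n | i ≤ e.1.1} :=
  fun w w' hw => congrArg F (funext fun e => hw _ (by simp [Edge.shift]))

lemma X_comp_shift (w : Omega n) (hin : i ≤ n) :
    X (n - i) (w ∘ Edge.shift i) = maxW (wtOf w) (i + 1) n := by
  rw [X, maxW_congr fun x y hx => wtOf_comp_shift w hx y, ← maxW_add_add, Nat.sub_add_cancel hin,
    add_comm]

end Tournament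

section FirstUnitEdgeEvent

variable {n i : ℕ}

/-- Edges are stored `0`-indexed, so these are the edges among the vertices `1, …, i`. -/
def lowEdges (n i : ℕ) : Finset (Edge n) := {e | (e.1.2 : ℕ) < i}

lemma card_lowEdges (hin : i ≤ n) : #(lowEdges n i) = i.choose 2 := by
  rw [lowEdges, ← Fintype.card_subtype]
  refine (Fintype.card_congr (Equiv.subtypeSubtypeEquivSubtypeInter
    (fun x : Fin n × Fin n => x.1 < x.2) (fun x => x.2 < i))).trans ?_
  rw [Fintype.card_subtype]
  set low : Finset (Fin n) := {a | (a : ℕ) < i}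
  have hfilter : ({x | x.1 < x.2 ∧ (x.2 : ℕ) < i} : Finset (Fin n × Fin n)) =
      {x ∈ low ×ˢ low | x.1 < x.2} := by
    ext x
    simp only [low, Finset.mem_filter, Finset.mem_univ, true_and, Finset.mem_product]
    omega
  rw [hfilter, Finset.card_product_filter_lt, Fin.card_filter_val_lt, min_eq_right hin]

def ZeroOnFirst (i : ℕ) (w : Omega n) : Prop := ∀ e ∈ lowEdges n i, w e = false

instance : DecidablePred (ZeroOnFirst (n := n) i) := fun _ => by
  unfold ZeroOnFirst
  infer_instance

def FirstUnitEdgeAt (i : ℕ) (w : Omega n) : Prop := ZeroOnFirst i w ∧ ¬ ZeroOnFirst (i + 1) w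

instance : DecidablePred (FirstUnitEdgeAt (n := n) i) := fun _ => by
  unfold FirstUnitEdgeAt
  infer_instance

variable {w : Omega n}

lemma zeroOnFirst_one (w : Omega n) : ZeroOnFirst 1 w := fun e he => by
  have := e.2
  simp [lowEdges] at he
  omega

lemma ZeroOnFirst.mono {j : ℕ} (h : ZeroOnFirst j w) (hij : i ≤ j) : ZeroOnFirst i w :=
  fun e he => h e (by simp_all [lowEdges]; omega)

lemma exists_edge_of_zeroOnFirst (h : ZeroOnFirst i w) (h' : ¬ ZeroOnFirst (i + 1) w) :
    ∃ e : Edge n, (e.1.2 : ℕ) = i ∧ w e = true := by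
  simp only [ZeroOnFirst, lowEdges, Finset.mem_filter, Finset.mem_univ, true_and, not_forall,
    Bool.not_eq_false] at h'
  obtain ⟨e, he, hwe⟩ := h'
  refine ⟨e, ?_, hwe⟩
  by_contra hne
  have := h e (by simp [lowEdges]; omega)
  simp_all

lemma zeroOnFirst_congr {j : ℕ} {w' : Omega n} (h : ∀ e : Edge n, (e.1.1 : ℕ) < i → w e = w' e)
    (hj : j ≤ i + 1) : ZeroOnFirst j w ↔ ZeroOnFirst j w' := by
  have hlow : ∀ e ∈ lowEdges n j, w e = w' e := fun e he => h e (by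
    have := e.2
    simp [lowEdges] at he
    omega)
  exact forall₂_congr fun e he => by rw [hlow e he]

lemma ite_firstUnitEdgeAt (w : Omega n) :
    (if FirstUnitEdgeAt i w then (1 : ℝ) else 0) =
      (if ZeroOnFirst i w then 1 else 0) - (if ZeroOnFirst (i + 1) w then 1 else 0) := by
  by_cases h' : ZeroOnFirst (i + 1) w
  · simp [FirstUnitEdgeAt, h', h'.mono (Nat.le_succ i)]
  · simp [FirstUnitEdgeAt, h']

lemma dependsOn_ite_firstUnitEdgeAt :
    DependsOn (fun w : Omega n => if FirstUnitEdgeAt i w then (1 : ℝ) else 0)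
      {e : Edge n | i ≤ e.1.1}ᶜ := fun w w' hw => by
  have hw' : ∀ e : Edge n, (e.1.1 : ℕ) < i → w e = w' e := fun e he => hw e (by simpa using he)
  simp only [FirstUnitEdgeAt, zeroOnFirst_congr hw' (Nat.le_succ i), zeroOnFirst_congr hw' le_rfl]

theorem X_eq_one_add (hin : i < n) (h : ZeroOnFirst i w)
    (h' : ¬ ZeroOnFirst (i + 1) w) : X n w = 1 + X (n - i) (w ∘ Edge.shift i) := by
  obtain ⟨e, hei, hwe⟩ := exists_edge_of_zeroOnFirst h h'
  have hone : wtOf w (e.1.1 + 1) (i + 1) = 1 := by rw [← hei, wtOf_edge, hwe]; rfl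
  have hlow : ∀ x y, y ≤ i → wtOf w x y = 0 := fun x y hy =>
    wtOf_eq_zero w fun e' he' => h e' (by simp [lowEdges]; omega)
  rw [X_comp_shift w hin.le, X]
  exact maxW_eq_one_add (wtOf_le_one w) hlow hone (by omega) (by have := e.2; omega) hin

theorem X_eq_zero (h : ZeroOnFirst n w) : X n w = 0 :=
  maxW_eq_zero fun _ _ _ => wtOf_eq_zero w fun e _ => h e (by simp [lowEdges])

end FirstUnitEdgeEvent

section GeneratingFunction

variable (p : ℝ) {n i : ℕ}

lemma Zpoly_eq_sum_smul : Zpoly p n = ∑ w, prob p w • (Polynomial.X : Polynomial ℝ) ^ X n w := by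
  simp only [Zpoly, Polynomial.C_mul']

lemma sum_prob_mul_ite_zeroOnFirst (hin : i ≤ n) :
    ∑ w : Omega n, prob p w * (if ZeroOnFirst i w then 1 else 0) = (1 - p) ^ i.choose 2 := by
  rw [← card_lowEdges hin, ← sum_bernoulliWeight_mul_ite_forall_mem_false]
  rfl

lemma sum_prob_mul_ite_firstUnitEdgeAt (hin : i < n) :
    ∑ w : Omega n, prob p w * (if FirstUnitEdgeAt i w then 1 else 0) =
      (1 - p) ^ i.choose 2 - (1 - p) ^ (i + 1).choose 2 := by
  simp only [ite_firstUnitEdgeAt, mul_sub, Finset.sum_sub_distrib,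
    sum_prob_mul_ite_zeroOnFirst p hin.le, sum_prob_mul_ite_zeroOnFirst p hin]

theorem sum_prob_mul_ite_firstUnitEdgeAt_smul (hin : i < n) :
    ∑ w : Omega n, (prob p w * if FirstUnitEdgeAt i w then 1 else 0) •
        (Polynomial.X : Polynomial ℝ) ^ X n w =
      Polynomial.C ((1 - p) ^ i.choose 2 - (1 - p) ^ (i + 1).choose 2) * Polynomial.X *
        Zpoly p (n - i) := by
  have hterm : ∀ w : Omega n, (prob p w * if FirstUnitEdgeAt i w then 1 else 0) •
      (Polynomial.X : Polynomial ℝ) ^ X n w =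
      (bernoulliWeight p w * if FirstUnitEdgeAt i w then 1 else 0) •
        (Polynomial.X * Polynomial.X ^ X (n - i) (w ∘ Edge.shift i)) := by
    intro w
    split_ifs with h
    · rw [X_eq_one_add hin h.1 h.2, pow_add, pow_one]
      rfl
    · simp
  rw [Finset.sum_congr rfl fun w _ => hterm w,
    sum_bernoulliWeight_mul_smul_of_dependsOn p _ dependsOn_ite_firstUnitEdgeAt
      (dependsOn_comp_shift fun z => Polynomial.X * Polynomial.X ^ X (n - i) z),
    sum_bernoulliWeight_smul_comp p Edge.shift_injective
      (fun z => (Polynomial.X : Polynomial ℝ) * Polynomial.X ^ X (n - i) z)]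
  have hprob : ∑ w : Omega n, bernoulliWeight p w * (if FirstUnitEdgeAt i w then 1 else 0) =
      (1 - p) ^ i.choose 2 - (1 - p) ^ (i + 1).choose 2 :=
    sum_prob_mul_ite_firstUnitEdgeAt p hin
  have hZ : ∑ z, bernoulliWeight p z • (Polynomial.X * Polynomial.X ^ X (n - i) z) =
      Polynomial.X * Zpoly p (n - i) := by
    simp_rw [Zpoly_eq_sum_smul, Finset.mul_sum, mul_smul_comm]
    rfl
  rw [hprob, hZ, ← Polynomial.C_mul', mul_assoc]

lemma sum_prob_mul_ite_zeroOnFirst_smul :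
    ∑ w : Omega n, (prob p w * if ZeroOnFirst n w then 1 else 0) •
        (Polynomial.X : Polynomial ℝ) ^ X n w = Polynomial.C ((1 - p) ^ n.choose 2) := by
  have hterm : ∀ w : Omega n, (prob p w * if ZeroOnFirst n w then 1 else 0) •
      (Polynomial.X : Polynomial ℝ) ^ X n w = (prob p w * if ZeroOnFirst n w then 1 else 0) • 1 := by
    intro w
    split_ifs with h
    · rw [X_eq_zero h, pow_zero]
    · simp
  rw [Finset.sum_congr rfl fun w _ => hterm w, ← Finset.sum_smul,
    sum_prob_mul_ite_zeroOnFirst p le_rfl, ← Polynomial.C_mul', mul_one]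

lemma sum_ite_firstUnitEdgeAt_add_ite_zeroOnFirst (hn : 1 ≤ n) (w : Omega n) :
    ∑ i ∈ Finset.Icc 1 (n - 1), (if FirstUnitEdgeAt i w then (1 : ℝ) else 0) +
      (if ZeroOnFirst n w then 1 else 0) = 1 := by
  obtain ⟨m, rfl⟩ := Nat.exists_eq_add_of_le' hn
  set a : ℕ → ℝ := fun j => if ZeroOnFirst j w then 1 else 0
  have htelescope : ∑ i ∈ Finset.Ico 1 (m + 1), (a i - a (i + 1)) = a 1 - a (m + 1) := by
    rw [← neg_sub, ← Finset.sum_Ico_sub a hn, ← Finset.sum_neg_distrib]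
    simp
  simp only [ite_firstUnitEdgeAt, Nat.add_sub_cancel, ← Finset.Ico_add_one_right_eq_Icc]
  rw [htelescope]
  simp [a, zeroOnFirst_one w]

end GeneratingFunction

theorem stmt7_general (p : ℝ) (n : ℕ) (hn : 1 ≤ n) :
    Zpoly p n =
      (∑ i ∈ Finset.Icc 1 (n - 1),
        Polynomial.C ((1 - p) ^ (i.choose 2) - (1 - p) ^ ((i + 1).choose 2)) *
          Polynomial.X * Zpoly p (n - i)) +
        Polynomial.C ((1 - p) ^ (n.choose 2)) := by
  calc Zpoly p n
      = ∑ w, (prob p w * (∑ i ∈ Finset.Icc 1 (n - 1), (if FirstUnitEdgeAt i w then 1 else 0) +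
          (if ZeroOnFirst n w then 1 else 0))) • (Polynomial.X : Polynomial ℝ) ^ X n w := by
        simp only [sum_ite_firstUnitEdgeAt_add_ite_zeroOnFirst hn, mul_one, Zpoly_eq_sum_smul]
    _ = (∑ i ∈ Finset.Icc 1 (n - 1), ∑ w, (prob p w * if FirstUnitEdgeAt i w then 1 else 0) •
          (Polynomial.X : Polynomial ℝ) ^ X n w) +
        ∑ w, (prob p w * if ZeroOnFirst n w then 1 else 0) •
          (Polynomial.X : Polynomial ℝ) ^ X n w := by
        simp only [mul_add, Finset.mul_sum, add_smul, Finset.sum_smul, Finset.sum_add_distrib]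
        rw [Finset.sum_comm]
    _ = _ := by
        rw [sum_prob_mul_ite_zeroOnFirst_smul]
        congr 1
        refine Finset.sum_congr rfl fun i hi => ?_
        rw [sum_prob_mul_ite_firstUnitEdgeAt_smul p (by simp at hi; omega)]

/-- recurrence for the probability generating function of `X_n`. -/
theorem stmt7 (p : ℝ) (hp : p ∈ Set.Ioo (0 : ℝ) 1) (n : ℕ) (hn : 1 ≤ n) :
    Zpoly p n =
      (∑ i ∈ Finset.Icc 1 (n - 1),
        Polynomial.C ((1 - p) ^ (i.choose 2) - (1 - p) ^ ((i + 1).choose 2)) *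
          Polynomial.X * Zpoly p (n - i)) +
        Polynomial.C ((1 - p) ^ (n.choose 2)) :=
  stmt7_general p n hn

end
end

section
/- Let p ∈ (0,1) and let E[X_n] satisfy Σ_{n≥0}(1+E[X_n])x^n = 1 + x/((1-x)^2 B_p(x)). Then lim_{n→∞} E[X_n]/(n-1) = 1/B_p(1) = (Σ_{n≥1} (1-p)^{C(n,2)})^{-1}. -/
/-- `A_p(x) = Σ_{n≥0} (1-p)^{C(n,2)} x^n` as a formal power series over `ℝ`. -/
noncomputable def Aps (p : ℝ) : PowerSeries ℝ :=
  PowerSeries.mk fun n => (1 - p) ^ (n.choose 2)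

/-- `B_p(x) = Σ_{n≥0} (1-p)^{C(n+1,2)} x^n` as a formal power series over `ℝ`. -/
noncomputable def Bps (p : ℝ) : PowerSeries ℝ :=
  PowerSeries.mk fun n => (1 - p) ^ ((n + 1).choose 2)

open Filter

/-!
The coefficients `bₙ = (1-p)^C(n+1,2)` of `B_p` decrease with `b₀ > b₁`, so
`(1 - z) B_p(z) = b₀ - ∑ (bₙ - bₙ₊₁) zⁿ⁺¹` has no zero on the closed unit disk
(Eneström–Kakeya). Since `B_p` converges beyond the unit disk, `1/B_p` is holomorphic on a disk
of radius `> 1`, and its Taylor coefficients `cₖ`, which are the coefficients of the formal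
inverse `B_p⁻¹`, sum to `1/B_p(1)`. The hypothesis says `1 + E[X_{n+1}] = ∑_{m ≤ n} ∑_{k ≤ m} cₖ`,
so `E[X_{n+1}]/n` is, up to `O(1/n)`, a Cesàro mean of the partial sums of `∑ cₖ`.
-/

open PowerSeries FormalMultilinearSeries Metric Finset
open scoped Topology

theorem FormalMultilinearSeries.ofScalars_sum_zero {𝕜 : Type*} [NontriviallyNormedField 𝕜]
    (b : ℕ → 𝕜) : (ofScalars 𝕜 b).sum 0 = b 0 :=
  (ofScalarsSum_zero (E := 𝕜) (c := b)).trans (mul_one _)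

namespace PowerSeries

theorem coeff_mul_mk_one {R : Type*} [Semiring R] (F : R⟦X⟧) (n : ℕ) :
    coeff n (F * mk 1) = ∑ i ∈ range (n + 1), coeff i F := by
  simp [coeff_mul, Finset.Nat.sum_antidiagonal_eq_sum_range_succ_mk]

theorem inv_one_sub_X {k : Type*} [Field k] : (1 - X : k⟦X⟧)⁻¹ = mk 1 :=
  (inv_eq_iff_mul_eq_one (by simp)).2 (mk_one_mul_one_sub_eq_one k)

theorem coeff_inv_one_sub_X_sq_mul {k : Type*} [Field k] (F : k⟦X⟧) (n : ℕ) :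
    coeff n ((1 - X) ^ 2 * F)⁻¹ = ∑ m ∈ range (n + 1), ∑ i ∈ range (m + 1), coeff i F⁻¹ := by
  simp only [PowerSeries.mul_inv_rev, sq, inv_one_sub_X, ← mul_assoc, coeff_mul_mk_one]

theorem map_inv {k K : Type*} [Field k] [Field K] (f : k →+* K) (F : k⟦X⟧) :
    map f F⁻¹ = (map f F)⁻¹ := by
  have hmap : constantCoeff (map f F) = f (constantCoeff F) := by
    rw [← coeff_zero_eq_constantCoeff_apply, coeff_map, coeff_zero_eq_constantCoeff_apply]
  by_cases h : constantCoeff F = 0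
  · rw [inv_eq_zero.2 h, inv_eq_zero.2 (by rw [hmap, h, map_zero]), map_zero]
  · rw [eq_comm, inv_eq_iff_mul_eq_one (by rwa [hmap, map_ne_zero]), ← map_mul,
      PowerSeries.inv_mul_cancel _ h, map_one]

section Taylor

variable {𝕜 : Type*} [NontriviallyNormedField 𝕜] [CompleteSpace 𝕜] [CharZero 𝕜] {f g : 𝕜 → 𝕜}

noncomputable def taylorAtZero (f : 𝕜 → 𝕜) : 𝕜⟦X⟧ :=
  mk fun n => iteratedDeriv n f 0 / n.factorial

theorem taylorAtZero_mul (hf : AnalyticAt 𝕜 f 0) (hg : AnalyticAt 𝕜 g 0) :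
    taylorAtZero (f * g) = taylorAtZero f * taylorAtZero g := by
  ext n
  simp only [taylorAtZero, coeff_mk, iteratedDeriv_mul hf.contDiffAt hg.contDiffAt, coeff_mul,
    Finset.Nat.sum_antidiagonal_eq_sum_range_succ_mk, Finset.sum_div]
  refine Finset.sum_congr rfl fun i hi => ?_
  rw [Nat.cast_choose _ (by grind)]
  field_simp [Nat.factorial_ne_zero]

omit [CompleteSpace 𝕜] [CharZero 𝕜] in
theorem taylorAtZero_congr (h : f =ᶠ[𝓝 0] g) : taylorAtZero f = taylorAtZero g := by
  ext n
  simp only [taylorAtZero, coeff_mk, h.iteratedDeriv_eq n]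

omit [CompleteSpace 𝕜] in
theorem taylorAtZero_one : taylorAtZero (1 : 𝕜 → 𝕜) = 1 := by
  ext n
  rcases n with _ | n <;> simp [taylorAtZero, Pi.one_def, iteratedDeriv_const, coeff_one]

theorem taylorAtZero_sum_ofScalars {b : ℕ → 𝕜} (hb : 0 < (ofScalars 𝕜 b).radius) :
    taylorAtZero (ofScalars 𝕜 b).sum = mk b := by
  have h := (ofScalars 𝕜 b).analyticOnNhd 0 (by simpa using hb)
  have := ofScalars_series_injective 𝕜 𝕜 <|
    ((ofScalars 𝕜 b).hasFPowerSeriesOnBall hb).hasFPowerSeriesAt.eq_formalMultilinearSeries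
      h.hasFPowerSeriesAt
  ext n
  simpa [taylorAtZero] using (congrFun this n).symm

theorem taylorAtZero_inv_sum_ofScalars {b : ℕ → 𝕜} (hb : 0 < (ofScalars 𝕜 b).radius)
    (hb0 : b 0 ≠ 0) : taylorAtZero (ofScalars 𝕜 b).sum⁻¹ = (mk b)⁻¹ := by
  have hB : AnalyticAt 𝕜 (ofScalars 𝕜 b).sum 0 :=
    (ofScalars 𝕜 b).analyticOnNhd 0 (by simpa using hb)
  have hB0 : (ofScalars 𝕜 b).sum 0 ≠ 0 := (ofScalars_sum_zero b).trans_ne hb0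
  have hinv : (ofScalars 𝕜 b).sum⁻¹ * (ofScalars 𝕜 b).sum =ᶠ[𝓝 0] 1 := by
    filter_upwards [hB.continuousAt.eventually_ne hB0] with z hz
    simp [hz]
  rw [eq_inv_iff_mul_eq_one (by simpa using hb0), ← taylorAtZero_sum_ofScalars hb,
    ← taylorAtZero_mul (hB.inv hB0) hB, taylorAtZero_congr hinv, taylorAtZero_one]

end Taylor

end PowerSeries

theorem hasSum_coeff_inv_mul_pow {b : ℕ → ℂ} (hrad : 1 < (ofScalars ℂ b).radius)
    (hne : ∀ z : ℂ, ‖z‖ ≤ 1 → (ofScalars ℂ b).sum z ≠ 0) {z : ℂ} (hz : ‖z‖ ≤ 1) :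
    HasSum (fun n => coeff n (mk b)⁻¹ * z ^ n) ((ofScalars ℂ b).sum z)⁻¹ := by
  set B := (ofScalars ℂ b).sum
  have hU : IsOpen (eball 0 (ofScalars ℂ b).radius ∩ B ⁻¹' {0}ᶜ) :=
    (ofScalars ℂ b).continuousOn.isOpen_inter_preimage isOpen_eball isOpen_compl_singleton
  have hdisk : closedBall (0 : ℂ) 1 ⊆ eball 0 (ofScalars ℂ b).radius ∩ B ⁻¹' {0}ᶜ := by
    intro w hw
    rw [mem_closedBall_zero_iff] at hw
    refine ⟨lt_of_le_of_lt ?_ hrad, hne w hw⟩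
    simpa [edist_zero_right, ← ofReal_norm] using hw
  obtain ⟨δ, hδ, hball⟩ := (isCompact_closedBall (0 : ℂ) 1).exists_thickening_subset_open hU hdisk
  rw [thickening_closedBall hδ zero_le_one] at hball
  have hdiff : DifferentiableOn ℂ B⁻¹ (ball 0 (δ + 1)) := fun w hw =>
    (((ofScalars ℂ b).analyticOnNhd w (hball hw).1).differentiableAt.inv
      (hball hw).2).differentiableWithinAt
  have hb0 : b 0 ≠ 0 := (ofScalars_sum_zero b).symm.trans_ne (hne 0 (by simp))
  have hcoeff : ∀ n, coeff n (mk b)⁻¹ = iteratedDeriv n B⁻¹ 0 / n.factorial := fun n => by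
    rw [← taylorAtZero_inv_sum_ofScalars (one_pos.trans hrad) hb0, taylorAtZero, coeff_mk]
  have hterm : (fun n : ℕ => (n.factorial : ℂ)⁻¹ • (z - 0) ^ n • iteratedDeriv n B⁻¹ 0) =
      fun n => coeff n (mk b)⁻¹ * z ^ n := by
    ext n
    rw [hcoeff, sub_zero, smul_eq_mul, smul_eq_mul]
    ring
  rw [← hterm]
  exact Complex.hasSum_taylorSeries_on_ball hdiff (by simpa using hz.trans_lt (by linarith))

theorem tsum_ofReal_mul_pow_ne_zero {b : ℕ → ℝ} (hb : Antitone b) (hs : Summable b)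
    (h01 : b 1 < b 0) {z : ℂ} (hz : ‖z‖ ≤ 1) : ∑' n, (b n : ℂ) * z ^ n ≠ 0 := by
  have hnonneg : ∀ n, 0 ≤ b n := hb.le_of_tendsto hs.tendsto_atTop_zero
  have hsummable : ∀ w : ℂ, ‖w‖ ≤ 1 → Summable fun n => (b n : ℂ) * w ^ n := fun w hw =>
    Summable.of_norm_bounded hs fun n => by
      simpa [abs_of_nonneg (hnonneg n)] using
        mul_le_of_le_one_right (hnonneg n) (pow_le_one₀ (norm_nonneg w) hw)
  have htel : ∀ w : ℂ, ‖w‖ ≤ 1 → HasSum (fun n => ((b n - b (n + 1) : ℝ) : ℂ) * w ^ (n + 1))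
      (b 0 - (1 - w) * ∑' n, (b n : ℂ) * w ^ n) := fun w hw => by
    have h := (hsummable w hw).hasSum
    have hshift := (hasSum_nat_add_iff' 1).2 h
    have hdiff := (h.mul_left w).sub hshift
    rw [Finset.sum_range_one, pow_zero, mul_one] at hdiff
    have hterm : (fun n => w * ((b n : ℂ) * w ^ n) - (b (n + 1) : ℂ) * w ^ (n + 1)) =
        fun n => ((b n - b (n + 1) : ℝ) : ℂ) * w ^ (n + 1) := by
      funext n; push_cast; ring
    rwa [hterm, show ∀ S : ℂ, w * S - (S - b 0) = b 0 - (1 - w) * S from fun S => by ring] at hdiff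
  have hπ : HasSum (fun n => b n - b (n + 1)) (b 0) := by
    simpa using Complex.hasSum_re (htel 1 norm_one.le)
  rcases eq_or_ne z 1 with rfl | hz1
  · simp only [one_pow, mul_one, ← Complex.ofReal_tsum, ne_eq, Complex.ofReal_eq_zero]
    exact (hs.tsum_pos hnonneg 0 (by linarith [hnonneg 1])).ne'
  · intro h0
    have hre : z.re < 1 := by
      by_contra! hre
      have : |z.re| = ‖z‖ := le_antisymm (Complex.abs_re_le_norm z)
        (hz.trans (hre.trans (le_abs_self _)))
      exact hz1 (Complex.ext (by simp; linarith [Complex.re_le_norm z])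
        (by simpa using Complex.abs_re_eq_norm.1 this))
    -- real parts: `b₀ = ∑ (bₙ - bₙ₊₁) Re zⁿ⁺¹ < ∑ (bₙ - bₙ₊₁) = b₀`
    have h := Complex.hasSum_re (htel z hz)
    simp only [h0, mul_zero, sub_zero, Complex.ofReal_re, Complex.re_ofReal_mul] at h
    refine (hasSum_lt (i := 0) (fun n => ?_) ?_ h hπ).false
    · exact mul_le_of_le_one_right (sub_nonneg.2 (hb n.le_succ))
        ((Complex.re_le_norm _).trans (by simpa using pow_le_one₀ (norm_nonneg z) hz))
    · simpa using mul_lt_of_lt_one_right (sub_pos.2 h01) hre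

theorem radius_ofScalars_ofReal (b : ℕ → ℝ) :
    (ofScalars ℂ fun n => (b n : ℂ)).radius = (ofScalars ℝ b).radius := by
  simp only [radius, ofScalars_norm, Complex.norm_real]

theorem hasSum_coeff_inv_of_antitone {b : ℕ → ℝ} (hb : Antitone b) (h01 : b 1 < b 0)
    (hrad : 1 < (ofScalars ℝ b).radius) :
    HasSum (fun n => coeff n (mk b)⁻¹) (∑' n, b n)⁻¹ := by
  have hs : Summable b := by
    have h := (ofScalars ℝ b).summable_norm_mul_pow (r := 1) (by simpa using hrad)
    simp only [ofScalars_norm, NNReal.coe_one, one_pow, mul_one] at h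
    exact h.of_norm
  have hsum : ∀ z, (ofScalars ℂ fun n => (b n : ℂ)).sum z = ∑' n, (b n : ℂ) * z ^ n := fun z =>
    ofScalars_sum_eq _ z
  have h := hasSum_coeff_inv_mul_pow ((radius_ofScalars_ofReal b).symm ▸ hrad)
    (fun z hz => hsum z ▸ tsum_ofReal_mul_pow_ne_zero hb hs h01 hz) (z := 1) norm_one.le
  have hmap : mk (fun n => (b n : ℂ)) = map Complex.ofRealHom (mk b) := by ext; simp
  simp only [one_pow, mul_one, hsum, hmap, ← PowerSeries.map_inv, coeff_map,
    Complex.ofRealHom_eq_coe, ← Complex.ofReal_tsum, ← Complex.ofReal_inv] at h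
  exact_mod_cast h

theorem one_lt_radius_ofScalars_pow_choose {q : ℝ} (hq0 : 0 < q) (hq1 : q < 1) :
    1 < (ofScalars ℝ fun n => q ^ ((n + 1).choose 2)).radius := by
  let r : NNReal := ⟨q, hq0.le⟩
  have hbound : ∀ n, ‖ofScalars ℝ (fun n => q ^ ((n + 1).choose 2)) n‖ * ((r⁻¹ : NNReal) : ℝ) ^ n
      ≤ 1 := fun n => by
    rw [ofScalars_norm, Real.norm_of_nonneg (by positivity), NNReal.coe_inv, inv_pow,
      ← div_eq_mul_inv, div_le_one (by positivity)]
    refine pow_le_pow_of_le_one hq0.le hq1.le ?_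
    rw [Nat.choose_succ_succ, Nat.choose_one_right]
    omega
  refine lt_of_lt_of_le ?_ (le_radius_of_bound _ 1 hbound)
  rw [ENNReal.one_lt_coe_iff, one_lt_inv₀ (by exact hq0)]
  exact hq1

theorem hasSum_coeff_inv_Bps {p : ℝ} (hp : p ∈ Set.Ioo 0 1) :
    HasSum (fun n => coeff n (Bps p)⁻¹) (∑' m : ℕ, (1 - p) ^ ((m + 1).choose 2))⁻¹ := by
  have hq0 : 0 < 1 - p := by linarith [hp.2]
  have hq1 : 1 - p < 1 := by linarith [hp.1]
  exact hasSum_coeff_inv_of_antitone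
    (fun m n hmn => pow_le_pow_of_le_one hq0.le hq1.le (Nat.choose_le_choose 2 (by omega)))
    (by simpa using hq1) (one_lt_radius_ofScalars_pow_choose hq0 hq1)

theorem tendsto_sum_partialSums_div {c : ℕ → ℝ} {s : ℝ} (h : HasSum c s) :
    Tendsto (fun n : ℕ => (∑ m ∈ range (n + 1), ∑ k ∈ range (m + 1), c k) / n) atTop (𝓝 s) := by
  have hS : Tendsto (fun m => ∑ k ∈ range (m + 1), c k) atTop (𝓝 s) :=
    (tendsto_add_atTop_iff_nat 1).2 h.tendsto_sum_nat
  have := hS.cesaro.add (hS.mul tendsto_one_div_atTop_nhds_zero_nat)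
  rw [mul_zero, add_zero] at this
  refine this.congr fun n => ?_
  rw [Finset.sum_range_succ (fun m => ∑ k ∈ range (m + 1), c k)]
  ring

/-- if `Σ (1+E[X_n]) x^n = 1 + x/((1-x)² B_p(x))`, then
`E[X_n]/(n-1) → 1/B_p(1) = (Σ_{n≥1} (1-p)^{C(n,2)})⁻¹`. -/
theorem stmt12 (p : ℝ) (hp : p ∈ Set.Ioo (0 : ℝ) 1) (f : ℕ → ℝ)
    (hf : PowerSeries.mk (fun n => 1 + f n) =
      1 + PowerSeries.X * ((1 - PowerSeries.X) ^ 2 * Bps p)⁻¹) :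
    Tendsto (fun n : ℕ => f n / ((n : ℝ) - 1)) atTop
      (nhds (∑' m : ℕ, (1 - p) ^ ((m + 1).choose 2))⁻¹) := by
  have hcoeff : ∀ n, f (n + 1) =
      ∑ m ∈ range (n + 1), ∑ k ∈ range (m + 1), PowerSeries.coeff k (Bps p)⁻¹ - 1 := fun n => by
    have h := congrArg (PowerSeries.coeff (n + 1)) hf
    rw [coeff_mk, map_add, coeff_one, if_neg n.succ_ne_zero, coeff_succ_X_mul,
      coeff_inv_one_sub_X_sq_mul] at h
    linarith
  have hlim := (tendsto_sum_partialSums_div (hasSum_coeff_inv_Bps hp)).sub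
    tendsto_one_div_atTop_nhds_zero_nat
  rw [sub_zero] at hlim
  refine (tendsto_add_atTop_iff_nat 1).1 (hlim.congr fun n => ?_)
  rw [hcoeff, Nat.cast_add_one, add_sub_cancel_right, sub_div, one_div]
end
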